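/- Let g ∈ SO(n,1) act conformally on B_n, let x_0 = g·0, and let 0 < ε < 1/6. Then B(x_0, (√2/8)(1-|x_0|^2) ε) ⊂ g·B(0,ε) ⊂ B(x_0, 6(1-|x_0|^2) ε). -/

import Mathlib

noncomputable section

open Metric MeasureTheory

/-- The quadratic form -x₀² + x₁² + … + xₙ² on ℝ^{n+1}. -/
def Qform (n : ℕ) (x : Fin (n + 1) → ℝ) : ℝ :=
  -(x 0) ^ 2 + ∑ i : Fin n, (x i.succ) ^ 2

/-- Membership in SO(n,1): preserves the Lorentz quadratic form, has determinant 1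
and g₀₀ ≥ 1. -/
structure IsSOn1 (n : ℕ) (g : Matrix (Fin (n + 1)) (Fin (n + 1)) ℝ) : Prop where
  q_inv : ∀ x : Fin (n + 1) → ℝ, Qform n (g.mulVec x) = Qform n x
  det_one : g.det = 1
  g00 : 1 ≤ g 0 0

/-- The conformal action of SO(n,1) on the unit ball of ℝⁿ. -/
def act {n : ℕ} (g : Matrix (Fin (n + 1)) (Fin (n + 1)) ℝ)
    (x : EuclideanSpace ℝ (Fin n)) : EuclideanSpace ℝ (Fin n) :=
  WithLp.toLp 2 fun p : Fin n =>
    ((1 + ‖x‖ ^ 2) / 2 * g p.succ 0 + ∑ l : Fin n, g p.succ l.succ * x l) /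
      ((1 - ‖x‖ ^ 2) / 2 + (1 + ‖x‖ ^ 2) / 2 * g 0 0 + ∑ l : Fin n, g 0 l.succ * x l)


/-!
Write `X = g (lift x)` with `lift x = ((1 + ‖x‖²)/2, x)`; then `act g x = X_spatial / D`, where
`D = (1 - ‖x‖²)/2 + X₀`. Since `g` preserves the Lorentz form,
`(1 - ‖g·x‖²) D(x) = 1 - ‖x‖²` and `‖g·y - g·z‖² D(y) D(z) = ‖y - z‖²`.
Cauchy–Schwarz against the zeroth row of `g`, whose spatial part has norm `√(g₀₀² - 1) ≤ g₀₀`,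
gives `D(x) ≥ (1 + g₀₀)(1 - ‖x‖)²/2`, while `D(0) = (1 + g₀₀)/2 = 1/(1 - ‖x₀‖²)`: this is the
outer inclusion. For the inner one, apply the distance identity to `g⁻¹ = η gᵀ η`, which sends `x₀`
to `0`, using `D ≥ 1 - ‖·‖²` on the ball.
-/

open Matrix
open scoped RealInnerProductSpace

theorem Matrix.eq_of_dotProduct_mulVec_self_eq {ι K : Type*} [Fintype ι] [DecidableEq ι]
    [Field K] [NeZero (2 : K)] {A B : Matrix ι ι K} (hA : A.IsSymm) (hB : B.IsSymm)
    (h : ∀ x, x ⬝ᵥ A *ᵥ x = x ⬝ᵥ B *ᵥ x) : A = B := by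
  ext i j
  have hij := h (Pi.single i 1 + Pi.single j 1)
  have hi := h (Pi.single i 1)
  have hj := h (Pi.single j 1)
  simp only [mulVec_add, dotProduct_add, add_dotProduct, mulVec_single_one,
    single_one_dotProduct] at hij hi hj
  simp only [col_apply] at hij hi hj
  have hAij := hA.apply i j
  have hBij := hB.apply i j
  refine mul_left_cancel₀ (two_ne_zero (α := K)) ?_
  linear_combination hij - hi - hj - hAij + hBij

theorem Matrix.mulVec_dotProduct_mulVec_mulVec {ι R : Type*} [Fintype ι] [CommSemiring R]
    (A g : Matrix ι ι R) (x y : ι → R) : g *ᵥ x ⬝ᵥ A *ᵥ (g *ᵥ y) = x ⬝ᵥ (gᵀ * A * g) *ᵥ y := by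
  rw [← mulVec_mulVec, ← mulVec_mulVec, dotProduct_mulVec x gᵀ, vecMul_transpose]

namespace Lorentz

variable {n : ℕ}

def eta (n : ℕ) : Matrix (Fin (n + 1)) (Fin (n + 1)) ℝ := diagonal (Fin.cons (-1) fun _ => 1)

lemma eta_mul_eta : eta n * eta n = 1 := by
  rw [eta, diagonal_mul_diagonal, ← diagonal_one]
  congr 1
  ext j
  cases j using Fin.cases <;> simp

lemma eta_isSymm : (eta n).IsSymm := isSymm_diagonal _

lemma qform_eq_dotProduct (x : Fin (n + 1) → ℝ) : Qform n x = x ⬝ᵥ eta n *ᵥ x := by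
  simp [Qform, eta, mulVec_diagonal, dotProduct, Fin.sum_univ_succ, sq]

def IsLorentz (g : Matrix (Fin (n + 1)) (Fin (n + 1)) ℝ) : Prop := gᵀ * eta n * g = eta n

variable {g : Matrix (Fin (n + 1)) (Fin (n + 1)) ℝ}

lemma isLorentz_of_qform (hg : ∀ x, Qform n (g *ᵥ x) = Qform n x) : IsLorentz g := by
  refine eq_of_dotProduct_mulVec_self_eq ?_ eta_isSymm fun x => ?_
  · simp [IsSymm, transpose_mul, eta_isSymm.eq, Matrix.mul_assoc]
  · rw [← mulVec_dotProduct_mulVec_mulVec, ← qform_eq_dotProduct, ← qform_eq_dotProduct, hg]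

namespace IsLorentz

lemma dotProduct_eta_mulVec (hg : IsLorentz g) (x y : Fin (n + 1) → ℝ) :
    g *ᵥ x ⬝ᵥ eta n *ᵥ (g *ᵥ y) = x ⬝ᵥ eta n *ᵥ y := by
  rw [mulVec_dotProduct_mulVec_mulVec, hg]

lemma eta_mul_transpose_mul_eta_mul (hg : IsLorentz g) : eta n * gᵀ * eta n * g = 1 := by
  simp only [Matrix.mul_assoc]
  rw [← Matrix.mul_assoc gᵀ, hg, eta_mul_eta]

lemma inv_eq (hg : IsLorentz g) : g⁻¹ = eta n * gᵀ * eta n :=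
  inv_eq_left_inv hg.eta_mul_transpose_mul_eta_mul

lemma inv_mul (hg : IsLorentz g) : g⁻¹ * g = 1 := by
  rw [hg.inv_eq]; exact hg.eta_mul_transpose_mul_eta_mul

lemma mul_inv (hg : IsLorentz g) : g * g⁻¹ = 1 := mul_eq_one_comm.mp hg.inv_mul

lemma inv (hg : IsLorentz g) : IsLorentz g⁻¹ :=
  calc g⁻¹ᵀ * eta n * g⁻¹ = g⁻¹ᵀ * (gᵀ * eta n * g) * g⁻¹ := by rw [hg]
    _ = (g * g⁻¹)ᵀ * eta n * (g * g⁻¹) := by simp only [transpose_mul, Matrix.mul_assoc]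
    _ = eta n := by rw [hg.mul_inv]; simp

lemma inv_apply_zero_zero (hg : IsLorentz g) : g⁻¹ 0 0 = g 0 0 := by
  simp [hg.inv_eq, eta]

lemma mul_eta_mul_transpose (hg : IsLorentz g) : g * eta n * gᵀ = eta n :=
  calc g * eta n * gᵀ = g * (eta n * gᵀ * eta n) * eta n := by
        simp only [Matrix.mul_assoc, eta_mul_eta, Matrix.mul_one]
    _ = eta n := by rw [← hg.inv_eq, hg.mul_inv, Matrix.one_mul]

lemma sum_sq_row_zero (hg : IsLorentz g) : ∑ l : Fin n, g 0 l.succ ^ 2 = g 0 0 ^ 2 - 1 := by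
  have := congrFun (congrFun hg.mul_eta_mul_transpose 0) 0
  simp [eta, mul_apply, diagonal_apply, Fin.sum_univ_succ] at this
  simp only [sq]
  linarith

end IsLorentz

/-- `lift x` is `(1 - ‖x‖²)/2` times the point of the hyperboloid `Qform n = -1` over `x`. -/
def lift (x : EuclideanSpace ℝ (Fin n)) : Fin (n + 1) → ℝ := Fin.cons ((1 + ‖x‖ ^ 2) / 2) x.ofLp

def spatial (X : Fin (n + 1) → ℝ) : EuclideanSpace ℝ (Fin n) := WithLp.toLp 2 (Fin.tail X)

def denom (g : Matrix (Fin (n + 1)) (Fin (n + 1)) ℝ) (x : EuclideanSpace ℝ (Fin n)) : ℝ :=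
  (1 - ‖x‖ ^ 2) / 2 + (g *ᵥ lift x) 0

@[simp] lemma lift_zero_coord (x : EuclideanSpace ℝ (Fin n)) : lift x 0 = (1 + ‖x‖ ^ 2) / 2 := rfl

@[simp] lemma spatial_lift (x : EuclideanSpace ℝ (Fin n)) : spatial (lift x) = x := rfl

@[simp] lemma spatial_smul (c : ℝ) (X : Fin (n + 1) → ℝ) : spatial (c • X) = c • spatial X := rfl

lemma dotProduct_eq_mul_add_inner (X Y : Fin (n + 1) → ℝ) :
    X ⬝ᵥ Y = X 0 * Y 0 + ⟪spatial X, spatial Y⟫ := by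
  simp [dotProduct, Fin.sum_univ_succ, spatial, PiLp.inner_apply, Fin.tail, mul_comm]

lemma dotProduct_eta_mulVec_eq_inner_sub (X Y : Fin (n + 1) → ℝ) :
    X ⬝ᵥ eta n *ᵥ Y = ⟪spatial X, spatial Y⟫ - X 0 * Y 0 := by
  simp [eta, mulVec_diagonal, dotProduct, Fin.sum_univ_succ, spatial, PiLp.inner_apply, Fin.tail,
    mul_comm]
  ring

lemma act_eq (g : Matrix (Fin (n + 1)) (Fin (n + 1)) ℝ) (x : EuclideanSpace ℝ (Fin n)) :
    act g x = (denom g x)⁻¹ • spatial (g *ᵥ lift x) := by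
  ext p
  simp [act, denom, spatial, lift, mulVec, dotProduct, Fin.sum_univ_succ, Fin.tail]
  ring

lemma IsLorentz.inner_spatial_mulVec_lift (hg : IsLorentz g) (y z : EuclideanSpace ℝ (Fin n)) :
    ⟪spatial (g *ᵥ lift y), spatial (g *ᵥ lift z)⟫ =
      (g *ᵥ lift y) 0 * (g *ᵥ lift z) 0 + ⟪y, z⟫ - (1 + ‖y‖ ^ 2) / 2 * ((1 + ‖z‖ ^ 2) / 2) := by
  have := hg.dotProduct_eta_mulVec (lift y) (lift z)
  rw [dotProduct_eta_mulVec_eq_inner_sub, dotProduct_eta_mulVec_eq_inner_sub, spatial_lift,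
    spatial_lift] at this
  simp only [lift_zero_coord] at this
  linarith

lemma IsLorentz.one_sub_norm_sq_act_mul_denom (hg : IsLorentz g) {x : EuclideanSpace ℝ (Fin n)}
    (hD : denom g x ≠ 0) : (1 - ‖act g x‖ ^ 2) * denom g x = 1 - ‖x‖ ^ 2 := by
  have hX := hg.inner_spatial_mulVec_lift x x
  rw [real_inner_self_eq_norm_sq, real_inner_self_eq_norm_sq] at hX
  have hX0 : (g *ᵥ lift x) 0 = denom g x - (1 - ‖x‖ ^ 2) / 2 := by rw [denom]; ring
  rw [act_eq, norm_smul, mul_pow, hX, hX0, norm_inv, Real.norm_eq_abs, inv_pow, sq_abs]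
  field_simp
  ring

lemma IsLorentz.norm_act_sub_act_sq_mul (hg : IsLorentz g) {y z : EuclideanSpace ℝ (Fin n)}
    (hy : denom g y ≠ 0) (hz : denom g z ≠ 0) :
    ‖act g y - act g z‖ ^ 2 * (denom g y * denom g z) = ‖y - z‖ ^ 2 := by
  have hYY := hg.inner_spatial_mulVec_lift y y
  have hYZ := hg.inner_spatial_mulVec_lift y z
  have hZZ := hg.inner_spatial_mulVec_lift z z
  rw [real_inner_self_eq_norm_sq, real_inner_self_eq_norm_sq] at hYY hZZ
  have hY0 : (g *ᵥ lift y) 0 = denom g y - (1 - ‖y‖ ^ 2) / 2 := by rw [denom]; ring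
  have hZ0 : (g *ᵥ lift z) 0 = denom g z - (1 - ‖z‖ ^ 2) / 2 := by rw [denom]; ring
  rw [act_eq, act_eq, norm_sub_sq_real, norm_sub_sq_real, norm_smul, norm_smul, inner_smul_left,
    inner_smul_right, mul_pow, mul_pow, hYY, hZZ, hYZ, hY0, hZ0, norm_inv, norm_inv,
    Real.norm_eq_abs, Real.norm_eq_abs, inv_pow, inv_pow, sq_abs, sq_abs, conj_trivial]
  field_simp
  ring

lemma IsLorentz.lift_act (hg : IsLorentz g) {x : EuclideanSpace ℝ (Fin n)} (hD : denom g x ≠ 0) :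
    lift (act g x) = (denom g x)⁻¹ • (g *ᵥ lift x) := by
  have hnorm := hg.one_sub_norm_sq_act_mul_denom hD
  funext j
  cases j using Fin.cases with
  | zero =>
    simp only [lift_zero_coord, Pi.smul_apply, smul_eq_mul]
    rw [show (g *ᵥ lift x) 0 = denom g x - (1 - ‖x‖ ^ 2) / 2 by rw [denom]; ring]
    field_simp
    linarith
  | succ p => simp [lift, act_eq, spatial, Fin.tail]

lemma IsLorentz.act_act (hg : IsLorentz g) (g' : Matrix (Fin (n + 1)) (Fin (n + 1)) ℝ)
    {x : EuclideanSpace ℝ (Fin n)} (hD : denom g x ≠ 0) :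
    act g' (act g x) = act (g' * g) x := by
  have hdenom : denom g' (act g x) = (denom g x)⁻¹ * denom (g' * g) x := by
    have hnorm : 1 - ‖act g x‖ ^ 2 = (denom g x)⁻¹ * (1 - ‖x‖ ^ 2) := by
      rw [← hg.one_sub_norm_sq_act_mul_denom hD]; field_simp
    rw [denom, hg.lift_act hD, mulVec_smul, mulVec_mulVec, Pi.smul_apply, smul_eq_mul,
      hnorm]
    simp only [denom]
    ring
  rw [act_eq g', hdenom, hg.lift_act hD, mulVec_smul, mulVec_mulVec, spatial_smul, smul_smul,
    act_eq (g' * g)]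
  congr 1
  field_simp

lemma act_one (x : EuclideanSpace ℝ (Fin n)) : act 1 x = x := by
  have : denom 1 x = 1 := by rw [denom, one_mulVec, lift_zero_coord]; ring
  rw [act_eq, this, one_mulVec, spatial_lift, inv_one, one_smul]

lemma denom_zero (g : Matrix (Fin (n + 1)) (Fin (n + 1)) ℝ) :
    denom g 0 = (1 + g 0 0) / 2 := by
  simp [denom, mulVec, dotProduct_eq_mul_add_inner, lift, spatial]
  ring

lemma IsLorentz.norm_spatial_row_zero_sq (hg : IsLorentz g) :
    ‖spatial (g 0)‖ ^ 2 = g 0 0 ^ 2 - 1 := by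
  rw [← hg.sum_sq_row_zero, EuclideanSpace.norm_sq_eq]
  simp [spatial, Fin.tail]

lemma IsLorentz.denom_ge (hg : IsLorentz g) (hg₀ : 0 ≤ g 0 0) (x : EuclideanSpace ℝ (Fin n)) :
    (1 - ‖x‖ ^ 2) / 2 + g 0 0 * (1 - ‖x‖) ^ 2 / 2 ≤ denom g x := by
  have hw : ‖spatial (g 0)‖ ≤ g 0 0 := by
    nlinarith [hg.norm_spatial_row_zero_sq, norm_nonneg (spatial (g 0))]
  have hcs : -(‖spatial (g 0)‖ * ‖x‖) ≤ ⟪spatial (g 0), x⟫ :=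
    neg_le_of_abs_le (abs_real_inner_le_norm _ _)
  have : denom g x = (1 - ‖x‖ ^ 2) / 2 + g 0 0 * ((1 + ‖x‖ ^ 2) / 2) + ⟪spatial (g 0), x⟫ := by
    rw [denom, mulVec, dotProduct_eq_mul_add_inner, lift_zero_coord, spatial_lift]; ring
  rw [this]
  nlinarith [mul_le_mul_of_nonneg_right hw (norm_nonneg x)]

lemma IsLorentz.denom_pos (hg : IsLorentz g) (hg₀ : 0 ≤ g 0 0) {x : EuclideanSpace ℝ (Fin n)}
    (hx : ‖x‖ < 1) : 0 < denom g x := by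
  have := hg.denom_ge hg₀ x
  have : 0 < 1 - ‖x‖ ^ 2 := by nlinarith [norm_nonneg x]
  nlinarith [sq_nonneg (1 - ‖x‖)]

lemma IsLorentz.one_sub_norm_sq_le_denom (hg : IsLorentz g) (hg₀ : 0 ≤ g 0 0)
    {x : EuclideanSpace ℝ (Fin n)} (hx : ‖x‖ < 1) : 1 - ‖x‖ ^ 2 ≤ denom g x := by
  have hD := hg.denom_pos hg₀ hx
  have := hg.one_sub_norm_sq_act_mul_denom hD.ne'
  nlinarith [sq_nonneg ‖act g x‖]

lemma IsLorentz.norm_act_lt_one (hg : IsLorentz g) (hg₀ : 0 ≤ g 0 0)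
    {x : EuclideanSpace ℝ (Fin n)} (hx : ‖x‖ < 1) : ‖act g x‖ < 1 := by
  have hD := hg.denom_pos hg₀ hx
  have := hg.one_sub_norm_sq_act_mul_denom hD.ne'
  have : 0 < 1 - ‖x‖ ^ 2 := by nlinarith [norm_nonneg x]
  have : ‖act g x‖ ^ 2 < 1 := by nlinarith
  nlinarith [norm_nonneg (act g x)]

lemma IsLorentz.norm_act_sub_act_sq_mul_le (hg : IsLorentz g) (hg₀ : 0 ≤ g 0 0)
    {y z : EuclideanSpace ℝ (Fin n)} (hy : ‖y‖ < 1) (hz : ‖z‖ < 1) :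
    ‖act g y - act g z‖ ^ 2 * ((1 - ‖y‖ ^ 2) * (1 - ‖z‖ ^ 2)) ≤ ‖y - z‖ ^ 2 := by
  rw [← hg.norm_act_sub_act_sq_mul (hg.denom_pos hg₀ hy).ne' (hg.denom_pos hg₀ hz).ne']
  have hy' := hg.one_sub_norm_sq_le_denom hg₀ hy
  have hz' := hg.one_sub_norm_sq_le_denom hg₀ hz
  gcongr <;> nlinarith [norm_nonneg y, norm_nonneg z]

lemma IsLorentz.norm_act_sub_act_zero_mul_le (hg : IsLorentz g) (hg₀ : 0 ≤ g 0 0)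
    {x : EuclideanSpace ℝ (Fin n)} (hx : ‖x‖ < 1) :
    ‖act g x - act g 0‖ * (1 - ‖x‖) ≤ (1 - ‖act g 0‖ ^ 2) * ‖x‖ := by
  have h0 : (1 - ‖act g 0‖ ^ 2) * ((1 + g 0 0) / 2) = 1 := by
    simpa [denom_zero] using
      hg.one_sub_norm_sq_act_mul_denom (x := 0) (by rw [denom_zero]; linarith)
  have hdist := hg.norm_act_sub_act_sq_mul (hg.denom_pos hg₀ hx).ne'
    (hg.denom_pos hg₀ (x := 0) (by simp)).ne'
  rw [sub_zero, denom_zero] at hdist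
  have hDx : (1 + g 0 0) / 2 * (1 - ‖x‖) ^ 2 ≤ denom g x := by
    nlinarith [hg.denom_ge hg₀ x, norm_nonneg x]
  have key : ‖act g x - act g 0‖ * (1 - ‖x‖) * ((1 + g 0 0) / 2) ≤ ‖x‖ := by
    have hQ := norm_nonneg (act g x - act g 0)
    refine (pow_le_pow_iff_left₀ (by have := sub_pos.2 hx; positivity) (norm_nonneg x)
      two_ne_zero).mp ?_
    rw [← hdist]
    have := mul_le_mul_of_nonneg_left hDx
      (by positivity : 0 ≤ ‖act g x - act g 0‖ ^ 2 * ((1 + g 0 0) / 2))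
    nlinarith
  calc ‖act g x - act g 0‖ * (1 - ‖x‖)
      = (1 - ‖act g 0‖ ^ 2) * (‖act g x - act g 0‖ * (1 - ‖x‖) * ((1 + g 0 0) / 2)) := by
        linear_combination (‖act g x - act g 0‖ * (1 - ‖x‖)) * h0.symm
    _ ≤ (1 - ‖act g 0‖ ^ 2) * ‖x‖ := by
        gcongr
        nlinarith [hg.norm_act_lt_one hg₀ (x := 0) (by simp), norm_nonneg (act g 0)]

lemma IsLorentz.image_ball_subset_ball (hg : IsLorentz g) (hg₀ : 0 ≤ g 0 0) {ε : ℝ} (hε : ε < 1) :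
    act g '' ball 0 ε ⊆ ball (act g 0) ((1 - ‖act g 0‖ ^ 2) * ε / (1 - ε)) := by
  rintro _ ⟨x, hx, rfl⟩
  rw [mem_ball_zero_iff] at hx
  have hδ : 0 < 1 - ‖act g 0‖ ^ 2 := by
    nlinarith [hg.norm_act_lt_one hg₀ (x := 0) (by simp), norm_nonneg (act g 0)]
  have h := hg.norm_act_sub_act_zero_mul_le hg₀ (hx.trans hε)
  rw [mem_ball, dist_eq_norm, lt_div_iff₀ (by linarith)]
  nlinarith [norm_nonneg (act g x - act g 0)]

lemma IsLorentz.ball_subset_image_ball (hg : IsLorentz g) (hg₀ : 0 ≤ g 0 0) {ε : ℝ} (hε : ε ≤ 1) :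
    ball (act g 0) ((1 - ‖act g 0‖ ^ 2) * ε / 4) ⊆ act g '' ball 0 ε := by
  intro y hyx₀
  rw [mem_ball, dist_eq_norm] at hyx₀
  set x₀ := act g 0
  have hx₀ : ‖x₀‖ < 1 := hg.norm_act_lt_one hg₀ (by simp)
  have hδ : 0 < 1 - ‖x₀‖ ^ 2 := by nlinarith [norm_nonneg x₀]
  have hr : (1 - ‖x₀‖ ^ 2) * ε / 4 ≤ (1 - ‖x₀‖ ^ 2) / 4 := by
    gcongr; exact mul_le_of_le_one_right hδ.le hε
  have hy₁ : ‖y‖ < ‖x₀‖ + (1 - ‖x₀‖ ^ 2) * ε / 4 := by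
    have := norm_sub_norm_le y x₀; linarith
  have hyδ : (1 - ‖x₀‖ ^ 2) / 4 ≤ 1 - ‖y‖ ^ 2 := by
    have := pow_le_pow_left₀ (norm_nonneg y) hy₁.le 2
    nlinarith [norm_nonneg x₀, norm_nonneg (y - x₀)]
  have hy : ‖y‖ < 1 := by nlinarith [norm_nonneg y]
  have hginv := hg.inv
  have hginv₀ : 0 ≤ g⁻¹ 0 0 := hg.inv_apply_zero_zero ▸ hg₀
  have hx₀' : act g⁻¹ x₀ = 0 := by
    rw [hg.act_act _ (hg.denom_pos hg₀ (by simp)).ne', hg.inv_mul, act_one]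
  refine ⟨act g⁻¹ y, ?_, ?_⟩
  · have := hginv.norm_act_sub_act_sq_mul_le hginv₀ hy hx₀
    rw [hx₀', sub_zero] at this
    rw [mem_ball_zero_iff]
    have hε₀ : 0 < ε := by
      by_contra! h; nlinarith [norm_nonneg (y - x₀), mul_nonpos_iff.2 (Or.inl ⟨hδ.le, h⟩)]
    have hsq : ‖y - x₀‖ ^ 2 < ((1 - ‖x₀‖ ^ 2) * ε / 4) ^ 2 :=
      pow_lt_pow_left₀ hyx₀ (norm_nonneg _) two_ne_zero
    have : ‖act g⁻¹ y‖ ^ 2 * (1 - ‖x₀‖ ^ 2) ^ 2 < ε ^ 2 * (1 - ‖x₀‖ ^ 2) ^ 2 := by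
      nlinarith [sq_nonneg ‖act g⁻¹ y‖, mul_le_mul_of_nonneg_left hyδ
        (by positivity : 0 ≤ ‖act g⁻¹ y‖ ^ 2 * (1 - ‖x₀‖ ^ 2))]
    exact (pow_lt_pow_iff_left₀ (norm_nonneg _) hε₀.le two_ne_zero).mp
      (lt_of_mul_lt_mul_right this (by positivity))
  · rw [hginv.act_act _ (hginv.denom_pos hginv₀ hy).ne', hg.mul_inv, act_one]

end Lorentz

theorem stmt12_general (n : ℕ) (g : Matrix (Fin (n + 1)) (Fin (n + 1)) ℝ)
    (hg : IsSOn1 n g) (ε : ℝ) (hε : 0 < ε) (hε1 : ε < 1 / 6) :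
    ball (act g (0 : EuclideanSpace ℝ (Fin n)))
        (Real.sqrt 2 / 8 * (1 - ‖act g (0 : EuclideanSpace ℝ (Fin n))‖ ^ 2) * ε) ⊆
      act g '' ball (0 : EuclideanSpace ℝ (Fin n)) ε ∧
    act g '' ball (0 : EuclideanSpace ℝ (Fin n)) ε ⊆
      ball (act g (0 : EuclideanSpace ℝ (Fin n)))
        (6 * (1 - ‖act g (0 : EuclideanSpace ℝ (Fin n))‖ ^ 2) * ε) := by
  have hL := Lorentz.isLorentz_of_qform hg.q_inv
  have hg₀ : 0 ≤ g 0 0 := zero_le_one.trans hg.g00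
  have hδ : 0 ≤ 1 - ‖act g (0 : EuclideanSpace ℝ (Fin n))‖ ^ 2 := by
    nlinarith [hL.norm_act_lt_one hg₀ (x := 0) (by simp), norm_nonneg (act g 0)]
  have hsqrt : Real.sqrt 2 ≤ 2 := Real.sqrt_le_iff.2 ⟨zero_le_two, by norm_num⟩
  constructor
  · refine (ball_subset_ball ?_).trans (hL.ball_subset_image_ball hg₀ (by linarith))
    nlinarith [mul_nonneg hδ hε.le]
  · refine (hL.image_ball_subset_ball hg₀ (by linarith)).trans (ball_subset_ball ?_)
    rw [div_le_iff₀ (by linarith)]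
    nlinarith [mul_nonneg hδ hε.le]

/-- Fact 1: for g ∈ SO(n,1), x₀ = g·0 and 0 < ε < 1/6,
B(x₀, (√2/8)(1-|x₀|²)ε) ⊆ g·B(0,ε) ⊆ B(x₀, 6(1-|x₀|²)ε). -/
theorem stmt12 (n : ℕ) (hn : 3 ≤ n) (g : Matrix (Fin (n + 1)) (Fin (n + 1)) ℝ)
    (hg : IsSOn1 n g) (ε : ℝ) (hε : 0 < ε) (hε1 : ε < 1 / 6) :
    ball (act g (0 : EuclideanSpace ℝ (Fin n)))
        (Real.sqrt 2 / 8 * (1 - ‖act g (0 : EuclideanSpace ℝ (Fin n))‖ ^ 2) * ε) ⊆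
      act g '' ball (0 : EuclideanSpace ℝ (Fin n)) ε ∧
    act g '' ball (0 : EuclideanSpace ℝ (Fin n)) ε ⊆
      ball (act g (0 : EuclideanSpace ℝ (Fin n)))
        (6 * (1 - ‖act g (0 : EuclideanSpace ℝ (Fin n))‖ ^ 2) * ε) :=
  stmt12_general n g hg ε hε hε1
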